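/- Let G be a graph. Then the isotropic connectivity of G and the vertical connectivity of M = M[IAS(G)] are related as follows: κ_B(G) = (κ(M) + 1)/2 if κ(M) < n, and κ_B(G) = ∞ otherwise. -/

import Mathlib

open scoped ENat

variable {V : Type*} [Fintype V] [DecidableEq V]

/-- The column of the matrix `IAS(G) = (I | A | A+I)` indexed by `(v, i)`:
`i = 0` gives `φ(v)` (identity column), `i = 1` gives `χ(v)` (column of `A`),
`i = 2` gives `ψ(v)` (column of `A + I`). -/
def iasCol (A : Matrix V V (ZMod 2)) : V × Fin 3 → V → ZMod 2 :=
  fun p w =>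
    if p.2 = 0 then (if w = p.1 then 1 else 0)
    else if p.2 = 1 then A w p.1
    else A w p.1 + (if w = p.1 then 1 else 0)

/-- The rank of a subset of the ground set `W(G) = V × Fin 3` of the isotropic
matroid: the GF(2)-rank of the corresponding set of columns. -/
noncomputable def iasRank (A : Matrix V V (ZMod 2)) (S : Set (V × Fin 3)) : ℕ :=
  Module.finrank (ZMod 2) (Submodule.span (ZMod 2) (iasCol A '' S))

/-- The connectivity function `λ(S) = r(S) + r(W - S) - r(M)`. -/
noncomputable def iasLambda (A : Matrix V V (ZMod 2)) (S : Set (V × Fin 3)) : ℕ :=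
  iasRank A S + iasRank A Sᶜ - iasRank A Set.univ

/-- Independence in the isotropic matroid. -/
def iasIndep (A : Matrix V V (ZMod 2)) (S : Set (V × Fin 3)) : Prop :=
  LinearIndependent (ZMod 2) (fun s : S => iasCol A s.1)

/-- Circuits of the isotropic matroid: minimal dependent sets. -/
def iasCircuit (A : Matrix V V (ZMod 2)) (C : Set (V × Fin 3)) : Prop :=
  ¬ iasIndep A C ∧ ∀ S ⊂ C, iasIndep A S

/-- An ordinary `k`-separation: `λ(S) < k` and `|S|, |W - S| ≥ k`. -/
def OrdinarySep (A : Matrix V V (ZMod 2)) (k : ℕ) (S : Set (V × Fin 3)) : Prop :=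
  0 < k ∧ iasLambda A S < k ∧ k ≤ S.ncard ∧ k ≤ Sᶜ.ncard

/-- A cyclic `k`-separation: `λ(S) < k` and both `S` and `W - S` are dependent. -/
def CyclicSep (A : Matrix V V (ZMod 2)) (k : ℕ) (S : Set (V × Fin 3)) : Prop :=
  0 < k ∧ iasLambda A S < k ∧ ¬ iasIndep A S ∧ ¬ iasIndep A Sᶜ

/-- A vertical `k`-separation: `λ(S) < k` and `r(S), r(W - S) ≥ k`. -/
def VerticalSep (A : Matrix V V (ZMod 2)) (k : ℕ) (S : Set (V × Fin 3)) : Prop :=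
  0 < k ∧ iasLambda A S < k ∧ k ≤ iasRank A S ∧ k ≤ iasRank A Sᶜ

/-- `τ(M) = min {k : M has an ordinary k-separation}`, with `min ∅ = ∞`. -/
noncomputable def iasTau (A : Matrix V V (ZMod 2)) : ℕ∞ :=
  sInf {k : ℕ∞ | ∃ m : ℕ, (m : ℕ∞) = k ∧ ∃ S, OrdinarySep A m S}

/-- `κ*(M) = min ({k : M has a cyclic k-separation} ∪ {|W| - r(M)})`. -/
noncomputable def iasKappaStar (A : Matrix V V (ZMod 2)) : ℕ :=
  sInf ({k : ℕ | ∃ S, CyclicSep A k S} ∪ {3 * Fintype.card V - iasRank A Set.univ})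

/-- `κ(M) = min ({k : M has a vertical k-separation} ∪ {r(M)})`. -/
noncomputable def iasKappa (A : Matrix V V (ZMod 2)) : ℕ :=
  sInf ({k : ℕ | ∃ S, VerticalSep A k S} ∪ {iasRank A Set.univ})

/-- The simple graph underlying a looped simple graph given by its adjacency matrix. -/
def toSimpleGraph (A : Matrix V V (ZMod 2)) : SimpleGraph V where
  Adj v w := v ≠ w ∧ A v w = 1 ∧ A w v = 1
  symm := ⟨fun v w ⟨h1, h2, h3⟩ => ⟨Ne.symm h1, h3, h2⟩⟩
  loopless := ⟨fun v h => h.1 rfl⟩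

/-- The open neighborhood `N_G(v)`. -/
def nbhd (A : Matrix V V (ZMod 2)) (v : V) : Set V := {u | u ≠ v ∧ A v u = 1}

/-- `v` is a pendant vertex: `N_G(v) = {w}` for some `w`. -/
def IsPendant (A : Matrix V V (ZMod 2)) (v : V) : Prop := ∃ w, nbhd A v = {w}

/-- `G` has a pair of twin vertices: `v ≠ w` with `N_G(v) - {w} = N_G(w) - {v}`. -/
def HasTwins (A : Matrix V V (ZMod 2)) : Prop :=
  ∃ v w, v ≠ w ∧ nbhd A v \ {w} = nbhd A w \ {v}

/-- The cut-rank `c_G(X)`: the GF(2)-rank of the submatrix `A[V - X, X]`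
(columns indexed by `X`, rows indexed by `V - X`). -/
noncomputable def cutRank (A : Matrix V V (ZMod 2)) (X : Set V) : ℕ :=
  Module.finrank (ZMod 2)
    (Submodule.span (ZMod 2) ((fun x : V => fun w : ↥(Xᶜ) => A w.1 x) '' X))

/-- `τ_G(X) = ⋃_{x ∈ X} τ_G(x)`, the union of the vertex triples of members of `X`. -/
def tauSet (X : Set V) : Set (V × Fin 3) := {p | p.1 ∈ X}

/-- Loop complementation at `v`. -/
def loopComp (A : Matrix V V (ZMod 2)) (v : V) : Matrix V V (ZMod 2) :=
  fun x y => A x y + if x = v ∧ y = v then 1 else 0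

/-- Simple local complementation at `v`. -/
def simpleLocalComp (A : Matrix V V (ZMod 2)) (v : V) : Matrix V V (ZMod 2) :=
  fun x y => A x y +
    if x ≠ y ∧ (x ≠ v ∧ A v x = 1) ∧ (y ≠ v ∧ A v y = 1) then 1 else 0

/-- Non-simple local complementation at `v`. -/
def nonSimpleLocalComp (A : Matrix V V (ZMod 2)) (v : V) : Matrix V V (ZMod 2) :=
  fun x y => simpleLocalComp A v x y + if x = y ∧ x ≠ v ∧ A v x = 1 then 1 else 0

/-- One local move. -/
def LocalStep (A B : Matrix V V (ZMod 2)) : Prop :=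
  ∃ v, B = loopComp A v ∨ B = simpleLocalComp A v ∨ B = nonSimpleLocalComp A v

/-- Local equivalence: a finite sequence of loop complementations and
(simple or non-simple) local complementations. -/
def LocallyEquiv (A B : Matrix V V (ZMod 2)) : Prop :=
  Relation.ReflTransGen LocalStep A B

/-- `G` has a split: a bipartition `(V₁, V₂)` of `V` with `|V₁|, |V₂| ≥ 2` such that the
GF(2)-rank of `A[V₁, V₂]` is at most 1. -/
def HasSplit (A : Matrix V V (ZMod 2)) : Prop :=
  ∃ X : Set V, 2 ≤ X.ncard ∧ 2 ≤ Xᶜ.ncard ∧ cutRank A X ≤ 1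

/-- A transverse circuit: a circuit of the isotropic matroid meeting each
vertex triple at most once. -/
def IsTransverseCircuit (A : Matrix V V (ZMod 2)) (C : Set (V × Fin 3)) : Prop :=
  iasCircuit A C ∧ ∀ p ∈ C, ∀ q ∈ C, p.1 = q.1 → p = q

/-- An isotropic `k`-separation of `G`: `|X|, |V - X| ≥ k` and `c_G(X) < k`. -/
def IsotropicSep (A : Matrix V V (ZMod 2)) (k : ℕ) (X : Set V) : Prop :=
  k ≤ X.ncard ∧ k ≤ Xᶜ.ncard ∧ cutRank A X < k

/-- The isotropic connectivity `κ_B(G)`, with `min ∅ = ∞`. -/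
noncomputable def kappaB (A : Matrix V V (ZMod 2)) : ℕ∞ :=
  sInf {j : ℕ∞ | ∃ k : ℕ, (k : ℕ∞) = j ∧ ∃ X, IsotropicSep A k X}

/-- The 5-cycle `C₅`. -/
def C5mat : Matrix (Fin 5) (Fin 5) (ZMod 2) :=
  fun i j => if (i.val + 1) % 5 = j.val ∨ (j.val + 1) % 5 = i.val then 1 else 0

/-- The wheel `W₅` : a 5-cycle on `{0,…,4}` plus a hub `5` adjacent to all. -/
def W5mat : Matrix (Fin 6) (Fin 6) (ZMod 2) :=
  fun i j =>
    if (i.val = 5 ∧ j.val ≠ 5) ∨ (j.val = 5 ∧ i.val ≠ 5) then 1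
    else if i.val ≠ 5 ∧ j.val ≠ 5 ∧ ((i.val + 1) % 5 = j.val ∨ (j.val + 1) % 5 = i.val) then 1
    else 0

/-!
Write `φ_v, χ_v, ψ_v = χ_v + φ_v` for the columns of `(I | A | A + I)` at `v`; any two of them span
the third. The columns over a vertex set `X` span the coordinate space of `X` plus the columns of
`A[V - X, X]` padded by zeros, so `r(τ(X)) = |X| + c(X)` and, `A` being symmetric,
`λ(τ(X)) = 2 c(X)`. Hence an isotropic `j`-separation `X` yields the vertical
`(2 c(X) + 1)`-separation `τ(X)`, so `κ(M) ≤ 2 j - 1`; as `2 j ≤ n`, there is none when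
`κ(M) ≥ n`.

Conversely let `S` be a vertical `κ(M)`-separation and `X` the set of vertices whose triple meets
`S` at least twice (so `V - X` is the analogous set for `W - S`). The padded cut columns of `X` and
of `V - X` lie in `span S ∩ span (W - S)`, whence `2 c(X) ≤ λ(S) < κ(M)`. Cutting `S` down to
`S ∩ τ(X)` does not change the span of the complement, and minimality of `κ(M)` then gives
`κ(M) ≤ |X| + c(X)`, and likewise `κ(M) ≤ |V - X| + c(X)`. Therefore `c(X) < |X|, |V - X|`,
`κ(M) = 2 c(X) + 1`, and `X` is an isotropic `(c(X) + 1)`-separation.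
-/

open Submodule Module

theorem Submodule.finrank_sup_of_disjoint {K M : Type*} [DivisionRing K] [AddCommGroup M]
    [Module K M] {p q : Submodule K M} [FiniteDimensional K p] [FiniteDimensional K q]
    (h : Disjoint p q) : finrank K ↥(p ⊔ q) = finrank K p + finrank K q := by
  have h' := finrank_sup_add_finrank_inf_eq p q
  rwa [h.eq_bot, finrank_bot, add_zero] at h'

theorem Pi.disjoint_spanSubset_compl {R ι : Type*} [Semiring R] [Finite ι] (X : Set ι) :
    Disjoint (Pi.spanSubset R X) (Pi.spanSubset R Xᶜ) := by
  rw [disjoint_iff_inf_le]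
  rintro f ⟨hX, hXc⟩
  rw [SetLike.mem_coe, Pi.mem_spanSubset_iff] at hX hXc
  funext w
  by_cases hw : w ∈ X
  exacts [hXc w (Set.notMem_compl_iff.2 hw), hX w hw]

theorem Pi.spanSubset_univ (R ι : Type*) [Semiring R] [Finite ι] :
    Pi.spanSubset R (Set.univ : Set ι) = ⊤ :=
  eq_top_iff.2 fun _ _ => Pi.mem_spanSubset_iff.2 fun w hw => absurd (Set.mem_univ w) hw

section CutSpan

omit [DecidableEq V]

theorem ncard_add_ncard_compl_eq_card (X : Set V) : X.ncard + Xᶜ.ncard = Fintype.card V := by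
  rw [Set.ncard_add_ncard_compl, Nat.card_eq_fintype_card]

noncomputable def cutSpan (A : Matrix V V (ZMod 2)) (X : Set V) :
    Submodule (ZMod 2) (V → ZMod 2) :=
  (span (ZMod 2) ((fun x : V => fun w : ↥(Xᶜ) => A w.1 x) '' X)).map
    (Function.ExtendByZero.linearMap (ZMod 2) Subtype.val)

omit [Fintype V] in
theorem finrank_cutSpan (A : Matrix V V (ZMod 2)) (X : Set V) :
    finrank (ZMod 2) (cutSpan A X) = cutRank A X :=
  (LinearEquiv.finrank_eq (equivMapOfInjective _
    (Function.extend_injective Subtype.val_injective (0 : V → ZMod 2)) _)).symm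

theorem cutSpan_le_spanSubset_compl (A : Matrix V V (ZMod 2)) (X : Set V) :
    cutSpan A X ≤ Pi.spanSubset (ZMod 2) Xᶜ := by
  refine LinearMap.map_le_range.trans ?_
  rintro _ ⟨g, rfl⟩
  exact Pi.mem_spanSubset_iff.2 fun w hw => Function.extend_val_apply' hw

theorem spanSubset_sup_cutSpan (A : Matrix V V (ZMod 2)) (X : Set V) :
    Pi.spanSubset (ZMod 2) X ⊔ cutSpan A X =
      Pi.spanSubset (ZMod 2) X ⊔ span (ZMod 2) (A.col '' X) := by
  set pad : V → V → ZMod 2 := fun x => Function.extend Subtype.val (fun w : ↥(Xᶜ) => A w.1 x) 0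
  have hpad : cutSpan A X = span (ZMod 2) (pad '' X) := by
    rw [cutSpan, map_span, Set.image_image]; rfl
  have hdiff : ∀ x, A.col x - pad x ∈ Pi.spanSubset (ZMod 2) X := fun x =>
    Pi.mem_spanSubset_iff.2 fun w hw => by
      simp [pad, Function.extend_val_apply (p := (· ∈ Xᶜ)) hw, Matrix.col]
  rw [hpad]
  apply le_antisymm <;> refine sup_le le_sup_left (span_le.2 ?_) <;> rintro _ ⟨x, hx, rfl⟩
  · rw [← sub_sub_cancel (A.col x) (pad x)]
    exact sub_mem (mem_sup_right (subset_span ⟨x, hx, rfl⟩)) (mem_sup_left (hdiff x))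
  · rw [← sub_add_cancel (A.col x) (pad x)]
    exact add_mem (mem_sup_left (hdiff x)) (mem_sup_right (subset_span ⟨x, hx, rfl⟩))

theorem finrank_spanSubset_sup_cutSpan (A : Matrix V V (ZMod 2)) (X : Set V) :
    finrank (ZMod 2) ↥(Pi.spanSubset (ZMod 2) X ⊔ cutSpan A X) = X.ncard + cutRank A X := by
  rw [finrank_sup_of_disjoint ((Pi.disjoint_spanSubset_compl X).mono_right
    (cutSpan_le_spanSubset_compl A X)), Pi.dim_spanSubset, finrank_cutSpan]

omit [Fintype V] in
theorem cutRank_eq_rank_submatrix (A : Matrix V V (ZMod 2)) (X : Set V) [Fintype X] :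
    cutRank A X = (A.submatrix ((↑) : ↥Xᶜ → V) ((↑) : ↥X → V)).rank := by
  rw [Matrix.rank_eq_finrank_span_cols, cutRank, Set.image_eq_range]
  rfl

theorem cutRank_compl {A : Matrix V V (ZMod 2)} (hA : A.IsSymm) (X : Set V) :
    cutRank A Xᶜ = cutRank A X := by
  classical
  rw [cutRank_eq_rank_submatrix, cutRank_eq_rank_submatrix, ← Matrix.rank_transpose,
    Matrix.transpose_submatrix, hA.eq]
  exact Matrix.rank_submatrix (A.submatrix ((↑) : ↥Xᶜ → V) ((↑) : ↥X → V)) (Equiv.refl _)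
    (Equiv.setCongr (compl_compl X))

end CutSpan

section Columns

omit [Fintype V]

variable (A : Matrix V V (ZMod 2))

noncomputable def iasSpan (S : Set (V × Fin 3)) : Submodule (ZMod 2) (V → ZMod 2) :=
  span (ZMod 2) (iasCol A '' S)

theorem iasRank_eq_finrank_iasSpan (S : Set (V × Fin 3)) :
    iasRank A S = finrank (ZMod 2) (iasSpan A S) := rfl

theorem iasSpan_mono {S T : Set (V × Fin 3)} (h : S ⊆ T) : iasSpan A S ≤ iasSpan A T :=
  span_mono (Set.image_mono h)

theorem iasCol_zero (v : V) : iasCol A (v, 0) = Pi.single v 1 := by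
  funext w; simp [iasCol, Pi.single_apply]

theorem iasCol_one (v : V) : iasCol A (v, 1) = A.col v := by
  funext w; simp [iasCol, Matrix.col]

theorem iasCol_two (v : V) : iasCol A (v, 2) = A.col v + Pi.single v 1 := by
  funext w; simp [iasCol, Matrix.col, Pi.single_apply]

theorem iasCol_eq_add_of_ne {i j k : Fin 3} (hij : i ≠ j) (hki : k ≠ i) (hkj : k ≠ j) (v : V) :
    iasCol A (v, k) = iasCol A (v, i) + iasCol A (v, j) := by
  ext w
  fin_cases i <;> fin_cases j <;> fin_cases k <;> grind [iasCol, Pi.add_apply]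

theorem iasCol_mem_iasSpan_of_mem_of_mem {S : Set (V × Fin 3)} {v : V} {i j : Fin 3}
    (hij : i ≠ j) (hi : (v, i) ∈ S) (hj : (v, j) ∈ S) (k : Fin 3) :
    iasCol A (v, k) ∈ iasSpan A S := by
  have mem : ∀ l, (v, l) ∈ S → iasCol A (v, l) ∈ iasSpan A S := fun l hl =>
    subset_span ⟨_, hl, rfl⟩
  by_cases hki : k = i
  · exact hki ▸ mem i hi
  by_cases hkj : k = j
  · exact hkj ▸ mem j hj
  rw [iasCol_eq_add_of_ne A hij hki hkj]
  exact add_mem (mem i hi) (mem j hj)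

def majorityVertices (S : Set (V × Fin 3)) : Set V :=
  {v | ∃ i j, i ≠ j ∧ (v, i) ∈ S ∧ (v, j) ∈ S}

omit [DecidableEq V] in
theorem majorityVertices_compl (S : Set (V × Fin 3)) :
    majorityVertices Sᶜ = (majorityVertices S)ᶜ := by
  classical
  have pigeonhole : ∀ p : Fin 3 → Bool, (∃ i j, i ≠ j ∧ p i = false ∧ p j = false) ↔
      ¬ ∃ i j, i ≠ j ∧ p i = true ∧ p j = true := by decide
  ext v
  simpa [majorityVertices] using pigeonhole fun i => decide ((v, i) ∈ S)

omit [DecidableEq V] in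
theorem tauSet_compl (X : Set V) : (tauSet X)ᶜ = tauSet Xᶜ := rfl

theorem iasSpan_compl_inter_tauSet_majorityVertices (S : Set (V × Fin 3)) :
    iasSpan A (S ∩ tauSet (majorityVertices S))ᶜ = iasSpan A Sᶜ := by
  refine le_antisymm (span_le.2 ?_)
    (iasSpan_mono A (Set.compl_subset_compl.2 Set.inter_subset_left))
  rintro _ ⟨⟨v, k⟩, hvk, rfl⟩
  by_cases hS : (v, k) ∈ S
  · have hv : v ∈ majorityVertices Sᶜ := by
      rw [majorityVertices_compl]
      exact fun hv => hvk ⟨hS, hv⟩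
    obtain ⟨i, j, hij, hi, hj⟩ := hv
    exact iasCol_mem_iasSpan_of_mem_of_mem A hij hi hj k
  · exact subset_span ⟨_, hS, rfl⟩

end Columns

section IsotropicMatroid

variable (A : Matrix V V (ZMod 2))

theorem iasSpan_eq_of_subset_majorityVertices {S : Set (V × Fin 3)} {X : Set V}
    (hSX : S ⊆ tauSet X) (hX : X ⊆ majorityVertices S) :
    iasSpan A S = Pi.spanSubset (ZMod 2) X ⊔ cutSpan A X := by
  have hmem : ∀ v ∈ X, ∀ k, iasCol A (v, k) ∈ iasSpan A S := fun v hv k => by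
    obtain ⟨i, j, hij, hi, hj⟩ := hX hv
    exact iasCol_mem_iasSpan_of_mem_of_mem A hij hi hj k
  rw [spanSubset_sup_cutSpan]
  apply le_antisymm
  · refine span_le.2 ?_
    rintro _ ⟨⟨v, k⟩, hvk, rfl⟩
    have hsingle : Pi.single v 1 ∈ Pi.spanSubset (ZMod 2) X ⊔ span (ZMod 2) (A.col '' X) :=
      mem_sup_left (subset_span ⟨v, hSX hvk, Pi.basisFun_apply _ _ _⟩)
    have hcol : A.col v ∈ Pi.spanSubset (ZMod 2) X ⊔ span (ZMod 2) (A.col '' X) :=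
      mem_sup_right (subset_span ⟨v, hSX hvk, rfl⟩)
    fin_cases k
    · simpa [iasCol_zero] using hsingle
    · simpa [iasCol_one] using hcol
    · simpa [iasCol_two] using add_mem hcol hsingle
  · refine sup_le (span_le.2 ?_) (span_le.2 ?_) <;> rintro _ ⟨v, hv, rfl⟩
    · simpa [iasCol_zero] using hmem v hv 0
    · simpa [iasCol_one] using hmem v hv 1

theorem iasSpan_univ : iasSpan A Set.univ = ⊤ := by
  refine eq_top_iff.2 (le_of_eq_of_le (Pi.spanSubset_univ (ZMod 2) V).symm ?_)
  rw [iasSpan_eq_of_subset_majorityVertices A (X := Set.univ) (Set.subset_univ _)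
    fun v _ => ⟨0, 1, by decide, Set.mem_univ _, Set.mem_univ _⟩]
  exact le_sup_left

theorem iasRank_univ : iasRank A Set.univ = Fintype.card V := by
  rw [iasRank_eq_finrank_iasSpan, iasSpan_univ, finrank_top, Module.finrank_fintype_fun_eq_card]

theorem iasRank_add_iasRank_compl_eq_card_add_finrank_inf (S : Set (V × Fin 3)) :
    iasRank A S + iasRank A Sᶜ =
      Fintype.card V + finrank (ZMod 2) ↥(iasSpan A S ⊓ iasSpan A Sᶜ) := by
  have hsup : iasSpan A S ⊔ iasSpan A Sᶜ = ⊤ := by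
    rw [iasSpan, iasSpan, ← span_union, ← Set.image_union, Set.union_compl_self]
    exact iasSpan_univ A
  have h := finrank_sup_add_finrank_inf_eq (iasSpan A S) (iasSpan A Sᶜ)
  rw [hsup, finrank_top, Module.finrank_fintype_fun_eq_card] at h
  exact h.symm

theorem iasLambda_eq_finrank_inf (S : Set (V × Fin 3)) :
    iasLambda A S = finrank (ZMod 2) ↥(iasSpan A S ⊓ iasSpan A Sᶜ) := by
  rw [iasLambda, iasRank_univ, iasRank_add_iasRank_compl_eq_card_add_finrank_inf,
    Nat.add_sub_cancel_left]

theorem iasRank_add_iasRank_compl (S : Set (V × Fin 3)) :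
    iasRank A S + iasRank A Sᶜ = Fintype.card V + iasLambda A S := by
  rw [iasLambda_eq_finrank_inf, iasRank_add_iasRank_compl_eq_card_add_finrank_inf]

theorem iasRank_tauSet (X : Set V) : iasRank A (tauSet X) = X.ncard + cutRank A X := by
  rw [iasRank_eq_finrank_iasSpan, iasSpan_eq_of_subset_majorityVertices A subset_rfl
    fun v hv => ⟨0, 1, by decide, hv, hv⟩, finrank_spanSubset_sup_cutSpan]

theorem iasLambda_tauSet {A : Matrix V V (ZMod 2)} (hA : A.IsSymm) (X : Set V) :
    iasLambda A (tauSet X) = 2 * cutRank A X := by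
  have h := iasRank_add_iasRank_compl A (tauSet X)
  rw [tauSet_compl, iasRank_tauSet, iasRank_tauSet, cutRank_compl hA] at h
  have hcard := ncard_add_ncard_compl_eq_card X
  omega

theorem iasSpan_inter_tauSet_majorityVertices (S : Set (V × Fin 3)) :
    iasSpan A (S ∩ tauSet (majorityVertices S)) =
      Pi.spanSubset (ZMod 2) (majorityVertices S) ⊔ cutSpan A (majorityVertices S) :=
  iasSpan_eq_of_subset_majorityVertices A Set.inter_subset_right
    fun v hv => by
      obtain ⟨i, j, hij, hi, hj⟩ := hv
      exact ⟨i, j, hij, ⟨hi, ⟨i, j, hij, hi, hj⟩⟩, ⟨hj, ⟨i, j, hij, hi, hj⟩⟩⟩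

theorem spanSubset_sup_cutSpan_majorityVertices_le (S : Set (V × Fin 3)) :
    Pi.spanSubset (ZMod 2) (majorityVertices S) ⊔ cutSpan A (majorityVertices S) ≤
      iasSpan A S := by
  rw [← iasSpan_inter_tauSet_majorityVertices]
  exact iasSpan_mono A Set.inter_subset_left

theorem two_mul_cutRank_majorityVertices_le_iasLambda {A : Matrix V V (ZMod 2)} (hA : A.IsSymm)
    (S : Set (V × Fin 3)) : 2 * cutRank A (majorityVertices S) ≤ iasLambda A S := by
  set X := majorityVertices S
  have hS := spanSubset_sup_cutSpan_majorityVertices_le A S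
  have hSc := spanSubset_sup_cutSpan_majorityVertices_le A Sᶜ
  rw [majorityVertices_compl] at hSc
  have hX := cutSpan_le_spanSubset_compl A X
  have hXc := cutSpan_le_spanSubset_compl A Xᶜ
  rw [compl_compl] at hXc
  have hle : cutSpan A X ⊔ cutSpan A Xᶜ ≤ iasSpan A S ⊓ iasSpan A Sᶜ :=
    sup_le (le_inf (le_sup_right.trans hS) (hX.trans (le_sup_left.trans hSc)))
      (le_inf (hXc.trans (le_sup_left.trans hS)) (le_sup_right.trans hSc))
  calc 2 * cutRank A X = finrank (ZMod 2) ↥(cutSpan A X ⊔ cutSpan A Xᶜ) := by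
        rw [finrank_sup_of_disjoint ((Pi.disjoint_spanSubset_compl X).symm.mono hX hXc),
          finrank_cutSpan, finrank_cutSpan, cutRank_compl hA, two_mul]
    _ ≤ finrank (ZMod 2) ↥(iasSpan A S ⊓ iasSpan A Sᶜ) := Submodule.finrank_mono hle
    _ = iasLambda A S := (iasLambda_eq_finrank_inf A S).symm

omit [Fintype V] in
theorem iasKappa_le {k : ℕ} {S : Set (V × Fin 3)} (h : VerticalSep A k S) : iasKappa A ≤ k :=
  Nat.sInf_le (Or.inl ⟨S, h⟩)

theorem exists_verticalSep_or_iasKappa_eq_card :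
    (∃ S, VerticalSep A (iasKappa A) S) ∨ iasKappa A = Fintype.card V := by
  rw [← iasRank_univ A]
  exact Nat.sInf_mem (s := {k | ∃ S, VerticalSep A k S} ∪ {iasRank A Set.univ}) ⟨_, Or.inr rfl⟩

theorem iasKappa_le_iasLambda_add_one {S : Set (V × Fin 3)}
    (hS : iasRank A S < Fintype.card V) (hSc : iasRank A Sᶜ < Fintype.card V) :
    iasKappa A ≤ iasLambda A S + 1 := by
  have h := iasRank_add_iasRank_compl A S
  exact iasKappa_le A ⟨Nat.succ_pos _, Nat.lt_succ_self _, by omega, by omega⟩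

theorem iasKappa_le_two_mul_cutRank_add_one {A : Matrix V V (ZMod 2)} (hA : A.IsSymm)
    {X : Set V} (hX : cutRank A X < X.ncard) (hXc : cutRank A X < Xᶜ.ncard) :
    iasKappa A ≤ 2 * cutRank A X + 1 := by
  have hcard := ncard_add_ncard_compl_eq_card X
  have hτ := iasRank_tauSet A X
  have hτc := iasRank_tauSet A Xᶜ
  rw [cutRank_compl hA] at hτc
  rw [← iasLambda_tauSet hA X]
  exact iasKappa_le_iasLambda_add_one A (by omega) (by rw [tauSet_compl]; omega)

end IsotropicMatroid

namespace VerticalSep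

variable {A : Matrix V V (ZMod 2)} {k : ℕ} {S : Set (V × Fin 3)}

omit [Fintype V] in
theorem compl (h : VerticalSep A k S) : VerticalSep A k Sᶜ := by
  obtain ⟨hk, hlam, hS, hSc⟩ := h
  refine ⟨hk, ?_, hSc, by rwa [compl_compl]⟩
  rwa [iasLambda, compl_compl, add_comm, ← iasLambda]

theorem iasRank_lt_card (h : VerticalSep A k S) : iasRank A S < Fintype.card V := by
  have := iasRank_add_iasRank_compl A S
  have := h.2.1
  have := h.2.2.2
  omega

theorem iasKappa_le_ncard_add_cutRank (h : VerticalSep A k S) :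
    iasKappa A ≤ (majorityVertices S).ncard + cutRank A (majorityVertices S) := by
  set T := S ∩ tauSet (majorityVertices S)
  have hT : iasRank A T = (majorityVertices S).ncard + cutRank A (majorityVertices S) := by
    rw [iasRank_eq_finrank_iasSpan, iasSpan_inter_tauSet_majorityVertices,
      finrank_spanSubset_sup_cutSpan]
  have hTc : iasRank A Tᶜ = iasRank A Sᶜ := by
    rw [iasRank_eq_finrank_iasSpan, iasRank_eq_finrank_iasSpan,
      iasSpan_compl_inter_tauSet_majorityVertices]
  have hTS : iasRank A T ≤ iasRank A S :=
    Submodule.finrank_mono (iasSpan_mono A Set.inter_subset_left)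
  have hS := h.iasRank_lt_card
  have hSc := h.compl.iasRank_lt_card
  have hsum := iasRank_add_iasRank_compl A T
  have := iasKappa_le_iasLambda_add_one A (S := T) (by omega) (by omega)
  omega

end VerticalSep

theorem exists_isotropicSep_of_iasKappa_lt {A : Matrix V V (ZMod 2)} (hA : A.IsSymm)
    (h : iasKappa A < Fintype.card V) : ∃ X, IsotropicSep A ((iasKappa A + 1) / 2) X := by
  obtain ⟨S, hS⟩ | h' := exists_verticalSep_or_iasKappa_eq_card A
  · have hX := hS.iasKappa_le_ncard_add_cutRank
    have hXc := hS.compl.iasKappa_le_ncard_add_cutRank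
    rw [majorityVertices_compl, cutRank_compl hA] at hXc
    have hcut := two_mul_cutRank_majorityVertices_le_iasLambda hA S
    have hlam := hS.2.1
    have hupper := iasKappa_le_two_mul_cutRank_add_one hA (X := majorityVertices S)
      (by omega) (by omega)
    exact ⟨majorityVertices S, by omega, by omega, by omega⟩
  · omega

namespace IsotropicSep

variable {A : Matrix V V (ZMod 2)} {j : ℕ} {X : Set V}

omit [DecidableEq V] in
theorem two_mul_le_card (h : IsotropicSep A j X) : 2 * j ≤ Fintype.card V := by
  have := ncard_add_ncard_compl_eq_card X
  have := h.1
  have := h.2.1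
  omega

theorem iasKappa_add_one_le (hA : A.IsSymm) (h : IsotropicSep A j X) :
    iasKappa A + 1 ≤ 2 * j := by
  obtain ⟨hX, hXc, hc⟩ := h
  have := iasKappa_le_two_mul_cutRank_add_one hA (X := X) (by omega) (by omega)
  omega

end IsotropicSep

theorem stmt7 (A : Matrix V V (ZMod 2)) (hA : A.IsSymm) :
    (iasKappa A < Fintype.card V → kappaB A = ((iasKappa A + 1) / 2 : ℕ)) ∧
    (¬ iasKappa A < Fintype.card V → kappaB A = ⊤) := by
  refine ⟨fun hlt => ?_, fun hge => ?_⟩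
  · obtain ⟨X, hX⟩ := exists_isotropicSep_of_iasKappa_lt hA hlt
    refine le_antisymm (sInf_le ⟨_, rfl, X, hX⟩) (le_sInf ?_)
    rintro _ ⟨j, rfl, Y, hY⟩
    have := hY.iasKappa_add_one_le hA
    exact_mod_cast (by omega : (iasKappa A + 1) / 2 ≤ j)
  · refine sInf_eq_top.2 ?_
    rintro _ ⟨j, rfl, Y, hY⟩
    have := hY.iasKappa_add_one_le hA
    have := hY.two_mul_le_card
    omega
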